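/- arXiv:1112.3730 — 4 statements merged into one kernel-verified Lean document; each statement's English description precedes it below -/
import Mathlib

section
/- Per-type CN derivative formula: Let δ be a check-node type whose local code (the row space of an h_δ × s_δ generator matrix G_δ over GF(2) of rank h_δ) has minimum Hamming weight at least 2, with coordinates typed by E. Then for all e,m ∈ E with s_{δ,e} > 0, the partial derivative of I_{EC,e}^{(δ)} with respect to its m-th argument, evaluated at the all-ones point I = (1,…,1), equals ξ_2^{(δ)}(e,m)/s_{δ,e}. In particular, it is 0 whenever the local code of δ has minimum distance greater than 2. -/
open scoped Classical

noncomputable section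

namespace MET

/-- Hamming weight of a binary vector. -/
def hWeight {m : ℕ} (x : Fin m → ZMod 2) : ℕ :=
  (Finset.univ.filter fun i => x i ≠ 0).card

/-- The row space of `G` (the local code) has minimum Hamming weight at least 2. -/
def HasMinDistGE2 {k q : ℕ} (G : Matrix (Fin k) (Fin q) (ZMod 2)) : Prop :=
  ∀ x : Fin k → ZMod 2, Matrix.vecMul x G ≠ 0 → 2 ≤ hWeight (Matrix.vecMul x G)

/-- The row space of `G` has minimum Hamming weight exactly 2. -/
def HasMinDistEq2 {k q : ℕ} (G : Matrix (Fin k) (Fin q) (ZMod 2)) : Prop :=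
  HasMinDistGE2 G ∧ ∃ x : Fin k → ZMod 2, hWeight (Matrix.vecMul x G) = 2

/-- The weight-2 vector supported on `{i,j}`. -/
def wt2vec {q : ℕ} (i j : Fin q) : Fin q → ZMod 2 :=
  fun r => if r = i ∨ r = j then 1 else 0

/-- Number of columns of edge type `l`. -/
def colCount {q n : ℕ} (τ : Fin q → Fin n) (l : Fin n) : ℕ :=
  (Finset.univ.filter fun j => τ j = l).card

/-- Rank of the matrix formed by the columns of `G` indexed by `A` together with the columns
of the `k × k` identity matrix indexed by `T`. -/
def colRank {k q : ℕ} (G : Matrix (Fin k) (Fin q) (ZMod 2))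
    (A : Finset (Fin q)) (T : Finset (Fin k)) : ℕ :=
  Matrix.rank (Matrix.of fun (i : Fin k) (j : {x // x ∈ A} ⊕ {x // x ∈ T}) =>
    Sum.elim (fun a => G i a.1) (fun t => if i = t.1 then (1 : ZMod 2) else 0) j)

/-- Multi-type split information function `ẽ_{g;u}` of a VN generator matrix. -/
def eTilde {n k q : ℕ} (G : Matrix (Fin k) (Fin q) (ZMod 2)) (τ : Fin q → Fin n)
    (g : Fin n → ℕ) (u : ℕ) : ℕ :=
  ∑ A ∈ Finset.univ.filter (fun A : Finset (Fin q) =>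
      ∀ l, (A.filter fun j => τ j = l).card = g l),
    ∑ T ∈ Finset.univ.filter (fun T : Finset (Fin k) => T.card = u),
      colRank G A T

/-- Multi-type information function `ẽ_g` of a CN generator matrix. -/
def eTildeC {n h s : ℕ} (G : Matrix (Fin h) (Fin s) (ZMod 2)) (τ : Fin s → Fin n)
    (g : Fin n → ℕ) : ℕ :=
  ∑ A ∈ Finset.univ.filter (fun A : Finset (Fin s) =>
      ∀ l, (A.filter fun j => τ j = l).card = g l),
    colRank G A ∅

/-- `χ_{2,u}(l,m)`: ordered pairs of distinct columns of types `l,m` supporting a weight-2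
codeword generated by a weight-`u` input word. -/
def chi2 {n k q : ℕ} (G : Matrix (Fin k) (Fin q) (ZMod 2)) (τ : Fin q → Fin n)
    (u : ℕ) (l m : Fin n) : ℕ :=
  (Finset.univ.filter fun p : Fin q × Fin q =>
    p.1 ≠ p.2 ∧ τ p.1 = l ∧ τ p.2 = m ∧
      ∃ x : Fin k → ZMod 2, hWeight x = u ∧ Matrix.vecMul x G = wt2vec p.1 p.2).card

/-- `ξ_2(l,m)`: ordered pairs of distinct coordinates of types `l,m` supporting a weight-2
codeword of the row space. -/
def xi2 {n h s : ℕ} (G : Matrix (Fin h) (Fin s) (ZMod 2)) (τ : Fin s → Fin n)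
    (l m : Fin n) : ℕ :=
  (Finset.univ.filter fun p : Fin s × Fin s =>
    p.1 ≠ p.2 ∧ τ p.1 = l ∧ τ p.2 = m ∧
      ∃ x : Fin h → ZMod 2, Matrix.vecMul x G = wt2vec p.1 p.2).card

/-- Range of the tuple `t`: `0 ≤ t l ≤ q l` for `l ≠ e` and `0 ≤ t e ≤ q e - 1`. -/
def tRange {n : ℕ} (q : Fin n → ℕ) (e : Fin n) : Finset (Fin n → ℕ) :=
  Fintype.piFinset fun l => Finset.range (if l = e then q l else q l + 1)

/-- The coefficient `a^{(γ,e)}_{t,z}` of the VN EXIT function. -/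
def aVN {n k q : ℕ} (G : Matrix (Fin k) (Fin q) (ZMod 2)) (τ : Fin q → Fin n)
    (e : Fin n) (t : Fin n → ℕ) (z : ℕ) : ℝ :=
  ((colCount τ e - t e : ℕ) : ℝ) *
      (eTilde G τ (fun l => colCount τ l - t l) (k - z) : ℝ)
    - ((t e + 1 : ℕ) : ℝ) *
      (eTilde G τ (fun l => colCount τ l - t l - (if l = e then 1 else 0)) (k - z) : ℝ)

/-- The coefficient `a^{(δ,e)}_{t}` of the CN EXIT function. -/
def aCN {n h s : ℕ} (G : Matrix (Fin h) (Fin s) (ZMod 2)) (τ : Fin s → Fin n)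
    (e : Fin n) (t : Fin n → ℕ) : ℝ :=
  ((colCount τ e - t e : ℕ) : ℝ) *
      (eTildeC G τ (fun l => colCount τ l - t l) : ℝ)
    - ((t e + 1 : ℕ) : ℝ) *
      (eTildeC G τ (fun l => colCount τ l - t l - (if l = e then 1 else 0)) : ℝ)

/-- Per-type VN EXIT function `I_{EV,e}^{(γ)}(I, ε)`. -/
def IEV {n k q : ℕ} (G : Matrix (Fin k) (Fin q) (ZMod 2)) (τ : Fin q → Fin n)
    (e : Fin n) (I : Fin n → ℝ) (ε : ℝ) : ℝ :=
  1 - (1 / (colCount τ e : ℝ)) *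
    ∑ z ∈ Finset.range (k + 1), ε ^ z * (1 - ε) ^ (k - z) *
      ∑ t ∈ tRange (colCount τ) e,
        (∏ l, (1 - I l) ^ t l * (I l) ^ (colCount τ l - t l - (if l = e then 1 else 0))) *
          aVN G τ e t z

/-- Per-type CN EXIT function `I_{EC,e}^{(δ)}(I)`. -/
def IEC {n h s : ℕ} (G : Matrix (Fin h) (Fin s) (ZMod 2)) (τ : Fin s → Fin n)
    (e : Fin n) (I : Fin n → ℝ) : ℝ :=
  1 - (1 / (colCount τ e : ℝ)) *
    ∑ t ∈ tRange (colCount τ) e,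
      (∏ l, (1 - I l) ^ t l * (I l) ^ (colCount τ l - t l - (if l = e then 1 else 0))) *
        aCN G τ e t

/-- A variable node type: a `k × q` generator matrix over `GF(2)` with a typing of its
columns by edge types (no punctured bits). -/
structure VNType (n : ℕ) where
  k : ℕ
  q : ℕ
  G : Matrix (Fin k) (Fin q) (ZMod 2)
  τ : Fin q → Fin n

/-- A check node type: an `h × s` generator matrix over `GF(2)` with a typing of its
columns by edge types. -/
structure CNType (n : ℕ) where
  h : ℕ
  s : ℕ
  G : Matrix (Fin h) (Fin s) (ZMod 2)
  τ : Fin s → Fin n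

/-- The variable-node side of a MET D-GLDPC ensemble. -/
structure VNSide (n : ℕ) where
  nV : ℕ
  vn : Fin nV → VNType n
  lam : Fin nV → Fin n → ℝ
  lam_nonneg : ∀ γ l, 0 ≤ lam γ l
  lam_sum : ∀ l, ∑ γ, lam γ l = 1
  lam_pos_iff : ∀ γ l, 0 < lam γ l ↔ 0 < colCount (vn γ).τ l

/-- The check-node side of a MET D-GLDPC ensemble. -/
structure CNSide (n : ℕ) where
  nC : ℕ
  cn : Fin nC → CNType n
  rho : Fin nC → Fin n → ℝ
  rho_nonneg : ∀ δ l, 0 ≤ rho δ l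
  rho_sum : ∀ l, ∑ δ, rho δ l = 1
  rho_pos_iff : ∀ δ l, 0 < rho δ l ↔ 0 < colCount (cn δ).τ l

/-- A MET D-GLDPC ensemble. -/
structure Ensemble (n : ℕ) extends VNSide n, CNSide n

/-- All VN local codes have full-rank generator matrix and minimum distance at least 2. -/
def VNSide.Good {n : ℕ} (V : VNSide n) : Prop :=
  ∀ γ, ((V.vn γ).G).rank = (V.vn γ).k ∧ HasMinDistGE2 (V.vn γ).G

/-- All CN local codes have full-rank generator matrix and minimum distance at least 2. -/
def CNSide.Good {n : ℕ} (C : CNSide n) : Prop :=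
  ∀ δ, ((C.cn δ).G).rank = (C.cn δ).h ∧ HasMinDistGE2 (C.cn δ).G

/-- The matrix `P(ε)` with entries `P^{l,m}(ε)`. -/
def Pmat {n : ℕ} (V : VNSide n) (ε : ℝ) : Matrix (Fin n) (Fin n) ℝ :=
  Matrix.of fun l m =>
    ∑ γ, if HasMinDistEq2 (V.vn γ).G then
      (V.lam γ l / (colCount (V.vn γ).τ l : ℝ)) *
        ∑ u ∈ Finset.Icc 1 (V.vn γ).k, (chi2 (V.vn γ).G (V.vn γ).τ u l m : ℝ) * ε ^ u
    else 0

/-- The matrix `C` with entries `C^{l,m}`. -/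
def Cmat {n : ℕ} (C : CNSide n) : Matrix (Fin n) (Fin n) ℝ :=
  Matrix.of fun l m =>
    ∑ δ, if HasMinDistEq2 (C.cn δ).G then
      (C.rho δ l / (colCount (C.cn δ).τ l : ℝ)) * (xi2 (C.cn δ).G (C.cn δ).τ l m : ℝ)
    else 0

/-- Aggregate VN EXIT function `I_{EV,e}(I,ε)`. -/
def IEVagg {n : ℕ} (V : VNSide n) (e : Fin n) (I : Fin n → ℝ) (ε : ℝ) : ℝ :=
  ∑ γ ∈ Finset.univ.filter (fun γ => 0 < V.lam γ e),
    V.lam γ e * IEV (V.vn γ).G (V.vn γ).τ e I ε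

/-- Aggregate CN EXIT function `I_{EC,e}(I)`. -/
def IECagg {n : ℕ} (C : CNSide n) (e : Fin n) (I : Fin n → ℝ) : ℝ :=
  ∑ δ ∈ Finset.univ.filter (fun δ => 0 < C.rho δ e),
    C.rho δ e * IEC (C.cn δ).G (C.cn δ).τ e I

/-- The EXIT recursion `f(·,ε)`. -/
def exitMap {n : ℕ} (E : Ensemble n) (ε : ℝ) (I : Fin n → ℝ) : Fin n → ℝ :=
  fun e => IEVagg E.toVNSide e (fun m => IECagg E.toCNSide m I) ε

/-- Local stability of the fixed point `1` of the EXIT recursion. -/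
def LocallyStable {n : ℕ} (E : Ensemble n) (ε : ℝ) : Prop :=
  ∃ U : Set (Fin n → ℝ), IsOpen U ∧ (fun _ => (1 : ℝ)) ∈ U ∧
    ∀ I ∈ U ∩ Set.Icc (fun _ => (0 : ℝ)) (fun _ => (1 : ℝ)),
      Filter.Tendsto (fun m => (exitMap E ε)^[m] I) Filter.atTop (nhds fun _ => (1 : ℝ))

/-- Spectral radius of a real square matrix: the maximum modulus of its complex
eigenvalues. -/
def specRad {m : ℕ} (A : Matrix (Fin m) (Fin m) ℝ) : ℝ :=
  (spectralRadius ℂ (A.map fun x : ℝ => (x : ℂ))).toReal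

/-!
At the all-ones point every factor `(1 - I l) ^ t l` with `l ≠ m` vanishes unless `t l = 0`, so
only `t = 0` and `t = δ_m` contribute to the derivative, the latter with weight `-1`. Passing to
the complement `B` of the selected columns, `a_t` becomes the total rank lost when, on top of an
erasure pattern `B` of type profile `t`, one more coordinate `j` of type `e` is erased. Erasing `B`
lowers the rank of `G` by the dimension of the subcode supported on `B`. Minimum distance at least
`2` makes this subcode trivial when `#B ≤ 1`, and for `B = {j, k}` it is spanned by the weight-2
word on `{j, k}` if that word is a codeword. Hence `a_0 = 0` and `a_{δ_m} = ξ₂(e, m)`.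
-/

open Finset Matrix

section PuncturedCode

variable {K m n p : Type*} [Field K] [Fintype m] [Fintype n] [Fintype p]

theorem rank_submatrix_add_finrank_ker (M : Matrix m n K) (f : p → n) :
    (M.submatrix id f).rank +
        Module.finrank K
          (LinearMap.ker ((LinearMap.funLeft K K f).domRestrict (LinearMap.range M.vecMulLinear)))
      = M.rank := by
  have hsub : (M.submatrix id f).vecMulLinear = LinearMap.funLeft K K f ∘ₗ M.vecMulLinear := by
    ext x j
    simp [vecMul, dotProduct, LinearMap.funLeft, Pi.single_apply]
  rw [← rank_transpose, ← rank_transpose M, rank, rank, mulVecLin_transpose, mulVecLin_transpose,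
    hsub, LinearMap.range_comp, ← LinearMap.range_domRestrict]
  exact LinearMap.finrank_range_add_finrank_ker _

end PuncturedCode

theorem eq_of_forall_ne_zero_iff {ι : Type*} {v w : ι → ZMod 2}
    (hvw : ∀ r, v r ≠ 0 ↔ w r ≠ 0) : v = w :=
  funext fun r => by
    have : ∀ a b : ZMod 2, (a ≠ 0 ↔ b ≠ 0) → a = b := by decide
    exact this _ _ (hvw r)

section LocalCode

variable {h s : ℕ} {G : Matrix (Fin h) (Fin s) (ZMod 2)}

theorem colRank_empty (G : Matrix (Fin h) (Fin s) (ZMod 2)) (A : Finset (Fin s)) :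
    colRank G A ∅ = (G.submatrix id ((↑) : A → Fin s)).rank := by
  rw [colRank, ← rank_submatrix _ (Equiv.refl _) (Equiv.sumEmpty A (∅ : Finset (Fin h))).symm]
  congr 1

variable (G) in
def subcodeOn (B : Finset (Fin s)) : Submodule (ZMod 2) (LinearMap.range G.vecMulLinear) :=
  LinearMap.ker ((LinearMap.funLeft (ZMod 2) (ZMod 2) ((↑) : ↥Bᶜ → Fin s)).domRestrict _)

theorem mem_subcodeOn {B : Finset (Fin s)} {v : LinearMap.range G.vecMulLinear} :
    v ∈ subcodeOn G B ↔ ∀ r ∉ B, (v : Fin s → ZMod 2) r = 0 := by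
  simp [subcodeOn, funext_iff, LinearMap.funLeft]

variable (G) in
theorem colRank_compl_add_finrank_subcodeOn (B : Finset (Fin s)) :
    colRank G Bᶜ ∅ + Module.finrank (ZMod 2) (subcodeOn G B) = G.rank := by
  rw [colRank_empty]
  exact rank_submatrix_add_finrank_ker G _

theorem support_wt2vec (i j : Fin s) :
    ({r | wt2vec i j r ≠ 0} : Finset (Fin s)) = {i, j} := by
  ext r
  by_cases hr : r = i ∨ r = j <;> simp [wt2vec, hr] <;> tauto

theorem two_le_card_support (hmd : HasMinDistGE2 G) {v : LinearMap.range G.vecMulLinear}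
    (hv : v ≠ 0) : 2 ≤ #{r | (v : Fin s → ZMod 2) r ≠ 0} := by
  obtain ⟨x, hx⟩ := v.2
  simp only [vecMulLinear_apply] at hx
  rw [← hx]
  exact hmd x (by rwa [hx, ne_eq, ZeroMemClass.coe_eq_zero])

theorem support_subset_of_mem_subcodeOn {B : Finset (Fin s)}
    {v : LinearMap.range G.vecMulLinear} (hv : v ∈ subcodeOn G B) :
    ({r | (v : Fin s → ZMod 2) r ≠ 0} : Finset (Fin s)) ⊆ B := fun r hr => by
  by_contra hrB
  exact (mem_filter.1 hr).2 (mem_subcodeOn.1 hv r hrB)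

theorem subcodeOn_eq_bot (hmd : HasMinDistGE2 G) {B : Finset (Fin s)} (hB : #B ≤ 1) :
    subcodeOn G B = ⊥ := by
  refine (Submodule.eq_bot_iff _).2 fun v hv => ?_
  by_contra hv0
  have := card_le_card (support_subset_of_mem_subcodeOn hv)
  have := two_le_card_support hmd hv0
  omega

theorem eq_wt2vec_of_mem_subcodeOn (hmd : HasMinDistGE2 G) {i j : Fin s} (hij : i ≠ j)
    {v : LinearMap.range G.vecMulLinear} (hv : v ∈ subcodeOn G {i, j}) (hv0 : v ≠ 0) :
    (v : Fin s → ZMod 2) = wt2vec i j := by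
  have hsupp : ({r | (v : Fin s → ZMod 2) r ≠ 0} : Finset (Fin s)) = {i, j} := by
    refine eq_of_subset_of_card_le (support_subset_of_mem_subcodeOn hv) ?_
    rw [card_pair hij]
    exact two_le_card_support hmd hv0
  refine eq_of_forall_ne_zero_iff fun r => ?_
  simpa using congrArg (r ∈ ·) (hsupp.trans (support_wt2vec i j).symm)

theorem finrank_subcodeOn_pair (hmd : HasMinDistGE2 G) {i j : Fin s} (hij : i ≠ j) :
    Module.finrank (ZMod 2) (subcodeOn G {i, j}) =
      if ∃ x : Fin h → ZMod 2, x ᵥ* G = wt2vec i j then 1 else 0 := by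
  split_ifs with hw
  · obtain ⟨x, hx⟩ := hw
    set w : LinearMap.range G.vecMulLinear := ⟨wt2vec i j, x, hx⟩
    have hw0 : w ≠ 0 := fun h0 => by
      simpa [w, wt2vec] using congrFun (congrArg Subtype.val h0) i
    suffices subcodeOn G {i, j} = Submodule.span (ZMod 2) {w} by
      rw [this, finrank_span_singleton hw0]
    refine le_antisymm (fun v hv => ?_) ?_
    · by_cases hv0 : v = 0
      · exact hv0 ▸ Submodule.zero_mem _
      · have : v = w := Subtype.ext (eq_wt2vec_of_mem_subcodeOn hmd hij hv hv0)
        rw [this]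
        exact Submodule.mem_span_singleton_self w
    · rw [Submodule.span_singleton_le_iff_mem, mem_subcodeOn]
      intro r hr
      simp_all [w, wt2vec]
  · suffices subcodeOn G {i, j} = ⊥ by rw [this, finrank_bot]
    refine (Submodule.eq_bot_iff _).2 fun v hv => ?_
    by_contra hv0
    obtain ⟨x, hx⟩ := v.2
    exact hw ⟨x, hx.trans (eq_wt2vec_of_mem_subcodeOn hmd hij hv hv0)⟩

theorem colRank_compl_of_card_le_one (hmd : HasMinDistGE2 G) {B : Finset (Fin s)}
    (hB : #B ≤ 1) : colRank G Bᶜ ∅ = G.rank := by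
  simpa [Submodule.finrank_eq_zero.2 (subcodeOn_eq_bot hmd hB)] using
    colRank_compl_add_finrank_subcodeOn G B

theorem colRank_compl_pair (hmd : HasMinDistGE2 G) {i j : Fin s} (hij : i ≠ j) :
    colRank G {i, j}ᶜ ∅ + (if ∃ x : Fin h → ZMod 2, x ᵥ* G = wt2vec i j then 1 else 0) =
      G.rank := by
  rw [← finrank_subcodeOn_pair hmd hij]
  exact colRank_compl_add_finrank_subcodeOn G _

end LocalCode

section TypeProfile

variable {n s : ℕ} (τ : Fin s → Fin n)

def typeProfile (B : Finset (Fin s)) : Fin n → ℕ := fun l => #{j ∈ B | τ j = l}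

theorem typeProfile_compl (B : Finset (Fin s)) :
    typeProfile τ Bᶜ = colCount τ - typeProfile τ B := by
  funext l
  have : #{j ∈ B | τ j = l} + #{j ∈ Bᶜ | τ j = l} = colCount τ l := by
    rw [colCount, ← card_union_of_disjoint (disjoint_filter_filter disjoint_compl_right),
      ← filter_union, union_compl]
  simp only [typeProfile, Pi.sub_apply]
  omega

theorem typeProfile_mono {B B' : Finset (Fin s)} (h : B ⊆ B') :
    typeProfile τ B ≤ typeProfile τ B' := fun _ => card_le_card (filter_subset_filter _ h)

theorem typeProfile_insert {B : Finset (Fin s)} {j : Fin s} (hj : j ∉ B) :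
    typeProfile τ (insert j B) = typeProfile τ B + Pi.single (τ j) 1 := by
  funext l
  rw [Pi.add_apply, typeProfile, typeProfile, filter_insert, Pi.single_apply]
  split_ifs <;> simp_all [card_insert_of_notMem, eq_comm]

theorem sum_typeProfile (B : Finset (Fin s)) : ∑ l, typeProfile τ B l = #B :=
  (card_eq_sum_card_fiberwise fun j _ => mem_univ (τ j)).symm

theorem typeProfile_eq_zero_iff {B : Finset (Fin s)} : typeProfile τ B = 0 ↔ B = ∅ := by
  refine ⟨fun hB => ?_, fun hB => ?_⟩
  · simpa [hB] using (sum_typeProfile τ B).symm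
  · funext l
    simp [typeProfile, hB]

theorem typeProfile_eq_single_iff {B : Finset (Fin s)} {l : Fin n} :
    typeProfile τ B = Pi.single l 1 ↔ ∃ k, τ k = l ∧ B = {k} := by
  have hsingle : ∀ k, typeProfile τ {k} = Pi.single (τ k) 1 := fun k => by
    rw [← insert_empty, typeProfile_insert τ (notMem_empty k),
      (typeProfile_eq_zero_iff τ).2 rfl, zero_add]
  refine ⟨fun hB => ?_, fun ⟨k, hk, hB⟩ => hB ▸ hk ▸ hsingle k⟩
  obtain ⟨k, rfl⟩ : ∃ k, B = {k} := card_eq_one.1 (by simp [← sum_typeProfile τ B, hB])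
  have hk := congrFun (hsingle k ▸ hB) (τ k)
  simp only [Pi.single_eq_same, Pi.single_apply] at hk
  exact ⟨k, by_contra fun h => by simp [h] at hk, rfl⟩

theorem mem_tRange_iff {q : Fin n → ℕ} {e : Fin n} {t : Fin n → ℕ} :
    t ∈ tRange q e ↔ t + Pi.single e 1 ≤ q := by
  simp only [tRange, Fintype.mem_piFinset, mem_range, Pi.le_def, Pi.add_apply, Pi.single_apply]
  refine forall_congr' fun l => ?_
  split_ifs <;> omega

theorem typeProfile_mem_tRange {B : Finset (Fin s)} {j : Fin s} (hj : j ∉ B) :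
    typeProfile τ B ∈ tRange (colCount τ) (τ j) := by
  rw [mem_tRange_iff, ← typeProfile_insert τ hj]
  exact typeProfile_mono τ (subset_univ _)

theorem eTildeC_colCount_sub {h : ℕ} (G : Matrix (Fin h) (Fin s) (ZMod 2)) {c : Fin n → ℕ}
    (hc : c ≤ colCount τ) :
    eTildeC G τ (colCount τ - c) = ∑ B with typeProfile τ B = c, colRank G Bᶜ ∅ := by
  refine sum_nbij' compl compl (fun A hA => ?_) (fun B hB => ?_) (fun A _ => compl_compl A)
    (fun B _ => compl_compl B) (fun A _ => by rw [compl_compl])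
  · simp only [mem_filter, mem_univ, true_and] at hA ⊢
    rw [typeProfile_compl, show typeProfile τ A = colCount τ - c from funext hA,
      tsub_tsub_cancel_of_le hc]
  · simp only [mem_filter, mem_univ, true_and] at hB ⊢
    intro l
    rw [← typeProfile, typeProfile_compl, hB]

theorem sum_typeProfile_add_single {M : Type*} [AddCommMonoid M] (f : Finset (Fin s) → M)
    (t : Fin n → ℕ) (e : Fin n) :
    ∑ C with typeProfile τ C = t + Pi.single e 1, (t e + 1) • f C =
      ∑ B with typeProfile τ B = t, ∑ j ∈ Bᶜ with τ j = e, f (insert j B) := by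
  have hcard : ∀ C ∈ ({C | typeProfile τ C = t + Pi.single e 1} : Finset (Finset (Fin s))),
      (t e + 1) • f C = ∑ j ∈ C with τ j = e, f C := fun C hC => by
    rw [sum_const, show #{j ∈ C | τ j = e} = typeProfile τ C e from rfl, (mem_filter.1 hC).2]
    simp
  rw [sum_congr rfl hcard, sum_comm' (t' := {j | τ j = e})
      (s' := fun j => {C | typeProfile τ C = t + Pi.single e 1 ∧ j ∈ C}) (by simp; tauto),
    sum_comm' (t' := {j | τ j = e}) (s' := fun j => {B | typeProfile τ B = t ∧ j ∉ B})
      (by simp; tauto)]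
  refine sum_congr rfl fun j hj => sum_nbij' (·.erase j) (insert j) (fun C hC => ?_)
    (fun B hB => ?_) (fun C hC => insert_erase (mem_filter.1 hC).2.2)
    (fun B hB => erase_insert (mem_filter.1 hB).2.2)
    (fun C hC => by rw [insert_erase (mem_filter.1 hC).2.2])
  · simp only [mem_filter, mem_univ, true_and] at hj hC ⊢
    refine ⟨add_right_cancel (b := Pi.single e 1) ?_, notMem_erase j C⟩
    rw [← hj, ← typeProfile_insert τ (notMem_erase j C), insert_erase hC.2, hC.1, hj]
  · simp only [mem_filter, mem_univ, true_and] at hj hB ⊢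
    rw [typeProfile_insert τ hB.2, hB.1, hj]
    exact ⟨rfl, mem_insert_self j B⟩

end TypeProfile

section RankLoss

variable {n h s : ℕ} (G : Matrix (Fin h) (Fin s) (ZMod 2)) (τ : Fin s → Fin n) (e : Fin n)

def rankLoss (t : Fin n → ℕ) : ℝ :=
  ∑ B with typeProfile τ B = t, ∑ j ∈ Bᶜ with τ j = e,
    ((colRank G Bᶜ ∅ : ℝ) - colRank G (insert j B)ᶜ ∅)

theorem aCN_eq_rankLoss {t : Fin n → ℕ} (ht : t ∈ tRange (colCount τ) e) :
    aCN G τ e t = rankLoss G τ e t := by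
  have hle := mem_tRange_iff.1 ht
  have hsub : (fun l => colCount τ l - t l - if l = e then 1 else 0) =
      colCount τ - (t + Pi.single e 1) := by
    funext l
    simp [Pi.single_apply, Nat.sub_sub]
  have hcard : ∀ B ∈ ({B | typeProfile τ B = t} : Finset (Finset (Fin s))),
      ((colCount τ e - t e : ℕ) : ℝ) * colRank G Bᶜ ∅ =
        ∑ j ∈ Bᶜ with τ j = e, (colRank G Bᶜ ∅ : ℝ) := fun B hB => by
    rw [sum_const, show #{j ∈ Bᶜ | τ j = e} = typeProfile τ Bᶜ e from rfl, typeProfile_compl,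
      (mem_filter.1 hB).2, nsmul_eq_mul]
    rfl
  have hcount := sum_typeProfile_add_single τ (fun C => (colRank G Cᶜ ∅ : ℝ)) t e
  push_cast [nsmul_eq_mul] at hcount
  rw [aCN, hsub, show (fun l => colCount τ l - t l) = colCount τ - t from rfl,
    eTildeC_colCount_sub τ G (le_trans le_self_add hle), eTildeC_colCount_sub τ G hle,
    rankLoss]
  push_cast
  rw [mul_sum, mul_sum, sum_congr rfl hcard, hcount, ← sum_sub_distrib]
  exact sum_congr rfl fun B _ => (sum_sub_distrib _ _).symm

theorem rankLoss_eq_zero_of_notMem {t : Fin n → ℕ} (ht : t ∉ tRange (colCount τ) e) :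
    rankLoss G τ e t = 0 := by
  refine sum_eq_zero fun B hB => sum_eq_zero fun j hj => absurd ?_ ht
  obtain ⟨hjB, rfl⟩ := mem_filter.1 hj
  rw [← (mem_filter.1 hB).2]
  exact typeProfile_mem_tRange τ (mem_compl.1 hjB)

variable {G}

theorem rankLoss_zero (hmd : HasMinDistGE2 G) : rankLoss G τ e 0 = 0 := by
  refine sum_eq_zero fun B hB => sum_eq_zero fun j _ => ?_
  obtain rfl := (typeProfile_eq_zero_iff τ).1 (mem_filter.1 hB).2
  rw [colRank_compl_of_card_le_one hmd (by simp), colRank_compl_of_card_le_one hmd (by simp),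
    sub_self]

theorem rankLoss_single (hmd : HasMinDistGE2 G) (m : Fin n) :
    rankLoss G τ e (Pi.single m 1) = xi2 G τ e m := by
  have hB : ({B | typeProfile τ B = Pi.single m 1} : Finset (Finset (Fin s))) =
      ({k | τ k = m} : Finset (Fin s)).map ⟨singleton, singleton_injective⟩ := by
    ext B
    simp [typeProfile_eq_single_iff, eq_comm]
  have hloss : ∀ j k : Fin s, j ≠ k → (colRank G {k}ᶜ ∅ : ℝ) - colRank G {j, k}ᶜ ∅ =
      if ∃ x : Fin h → ZMod 2, x ᵥ* G = wt2vec j k then 1 else 0 := fun j k hjk => by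
    rw [colRank_compl_of_card_le_one hmd (by simp), ← colRank_compl_pair hmd hjk]
    push_cast
    ring
  rw [rankLoss, hB, sum_map, xi2, natCast_card_filter, Fintype.sum_prod_type, sum_comm,
    sum_filter]
  refine sum_congr rfl fun k _ => ?_
  split_ifs with hk
  · simp only [Function.Embedding.coeFn_mk]
    rw [sum_congr rfl fun j hj => hloss j k (by simpa using (mem_filter.1 hj).1), compl_singleton,
      sum_filter]
    simp only [hk, true_and, ite_and, ← sum_filter, filter_ne']
  · simp [hk]

end RankLoss

section Derivative

theorem hasDerivAt_one_sub_pow_mul_pow (a b : ℕ) :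
    HasDerivAt (fun x : ℝ => (1 - x) ^ a * x ^ b)
      (if a = 0 then (b : ℝ) else if a = 1 then -1 else 0) 1 := by
  refine ((((hasDerivAt_id (1 : ℝ)).const_sub 1).fun_pow a).fun_mul
    (hasDerivAt_pow b (1 : ℝ))).congr_deriv ?_
  rcases a with _ | _ | a <;> simp

theorem hasDerivAt_prod_update_one {ι : Type*} [Fintype ι] [DecidableEq ι] (t c : ι → ℕ)
    (m : ι) :
    HasDerivAt
      (fun x : ℝ => ∏ l, (1 - Function.update (fun _ => (1 : ℝ)) m x l) ^ t l *
        Function.update (fun _ => (1 : ℝ)) m x l ^ c l)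
      (if t = 0 then (c m : ℝ) else if t = Pi.single m 1 then -1 else 0) 1 := by
  set F := fun x : ℝ => ∏ l, (1 - Function.update (fun _ => (1 : ℝ)) m x l) ^ t l *
    Function.update (fun _ => (1 : ℝ)) m x l ^ c l
  by_cases hz : ∀ l ≠ m, t l = 0
  · have ht : ∀ u : ℕ, t = (Pi.single m u : ι → ℕ) ↔ t m = u := fun u =>
      ⟨fun h => by simp [h], fun h => funext fun l => by by_cases hl : l = m <;> simp_all⟩
    have hF : F = fun x => (1 - x) ^ t m * x ^ c m := funext fun x => by
      simp only [F]
      rw [Fintype.prod_eq_single m fun l hl => by simp [hl, hz l hl]]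
      simp
    have h0 : t = 0 ↔ t m = 0 := by simpa using ht 0
    rw [hF]
    simpa only [h0, ht 1] using hasDerivAt_one_sub_pow_mul_pow (t m) (c m)
  · push Not at hz
    obtain ⟨l, hlm, htl⟩ := hz
    have hF : F = fun _ => 0 := funext fun x => prod_eq_zero (mem_univ l) (by simp [hlm, htl])
    have h0 : t ≠ 0 := fun h => htl (by simp [h])
    have h1 : t ≠ Pi.single m 1 := fun h => htl (by simp [h, hlm])
    rw [hF, if_neg h0, if_neg h1]
    exact hasDerivAt_const _ _

end Derivative

section CheckNodeExit

variable {n h s : ℕ} (G : Matrix (Fin h) (Fin s) (ZMod 2)) (τ : Fin s → Fin n) (e m : Fin n)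

theorem hasDerivAt_IEC_update_one :
    HasDerivAt (fun x : ℝ => IEC G τ e (Function.update (fun _ => (1 : ℝ)) m x))
      (-(1 / (colCount τ e : ℝ) * ∑ t ∈ tRange (colCount τ) e,
        (if t = 0 then ((colCount τ m - t m - if m = e then 1 else 0 : ℕ) : ℝ)
          else if t = Pi.single m 1 then -1 else 0) * aCN G τ e t)) 1 :=
  ((HasDerivAt.fun_sum fun t _ => (hasDerivAt_prod_update_one t _ m).mul_const _).const_mul
    _).const_sub 1

theorem sum_mul_aCN_eq_neg_xi2 (hmd : HasMinDistGE2 G) (c : (Fin n → ℕ) → ℝ) :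
    ∑ t ∈ tRange (colCount τ) e,
        (if t = 0 then c t else if t = Pi.single m 1 then -1 else 0) * aCN G τ e t =
      -(xi2 G τ e m : ℝ) := by
  rw [sum_congr rfl fun t ht => by rw [aCN_eq_rankLoss G τ e ht], sum_eq_single (Pi.single m 1)]
  · simp [rankLoss_single τ e hmd m]
  · intro t _ ht
    split_ifs with h0
    · rw [h0, rankLoss_zero τ e hmd, mul_zero]
    · exact zero_mul _
  · intro ht
    rw [rankLoss_eq_zero_of_notMem G τ e ht, mul_zero]

variable {G}

theorem xi2_eq_zero_of_three_le
    (h3 : ∀ x : Fin h → ZMod 2, x ᵥ* G ≠ 0 → 3 ≤ hWeight (x ᵥ* G)) (l m : Fin n) :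
    xi2 G τ l m = 0 := by
  refine card_eq_zero.2 (filter_eq_empty_iff.2 fun p _ ⟨hp, _, _, x, hx⟩ => ?_)
  have hw : hWeight (x ᵥ* G) = 2 := by
    rw [hWeight, hx, support_wt2vec, card_pair hp]
  have := h3 x fun h0 => by simp [h0, hWeight] at hw
  omega

end CheckNodeExit

theorem deriv_IEC_eq_xi_general {n h s : ℕ}
    (G : Matrix (Fin h) (Fin s) (ZMod 2)) (τ : Fin s → Fin n)
    (hmd : HasMinDistGE2 G)
    (e m : Fin n) :
    deriv (fun x : ℝ => IEC G τ e (Function.update (fun _ => (1 : ℝ)) m x)) 1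
      = (xi2 G τ e m : ℝ) / (colCount τ e : ℝ) ∧
    ((∀ x : Fin h → ZMod 2, Matrix.vecMul x G ≠ 0 → 3 ≤ hWeight (Matrix.vecMul x G)) →
      deriv (fun x : ℝ => IEC G τ e (Function.update (fun _ => (1 : ℝ)) m x)) 1 = 0) := by
  have hderiv : deriv (fun x : ℝ => IEC G τ e (Function.update (fun _ => (1 : ℝ)) m x)) 1
      = (xi2 G τ e m : ℝ) / (colCount τ e : ℝ) := by
    rw [(hasDerivAt_IEC_update_one G τ e m).deriv, sum_mul_aCN_eq_neg_xi2 G τ e m hmd]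
    ring
  refine ⟨hderiv, fun h3 => ?_⟩
  rw [hderiv, xi2_eq_zero_of_three_le τ h3, Nat.cast_zero, zero_div]

/-- **Per-type CN derivative formula.** For a CN type with full-rank generator matrix
whose local code has minimum distance at least `2`, the partial derivative of
`I_{EC,e}^{(δ)}` with respect to its `m`-th argument, evaluated at the all-ones point,
equals `ξ_2^{(δ)}(e,m) / s_{δ,e}`; in particular it is `0` whenever the local code has
minimum distance greater than `2`. -/
theorem deriv_IEC_eq_xi {n h s : ℕ} (hn : 1 ≤ n)
    (G : Matrix (Fin h) (Fin s) (ZMod 2)) (τ : Fin s → Fin n)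
    (hrk : G.rank = h) (hmd : HasMinDistGE2 G)
    (e m : Fin n) (he : 0 < colCount τ e) :
    deriv (fun x : ℝ => IEC G τ e (Function.update (fun _ => (1 : ℝ)) m x)) 1
      = (xi2 G τ e m : ℝ) / (colCount τ e : ℝ) ∧
    ((∀ x : Fin h → ZMod 2, Matrix.vecMul x G ≠ 0 → 3 ≤ hWeight (Matrix.vecMul x G)) →
      deriv (fun x : ℝ => IEC G τ e (Function.update (fun _ => (1 : ℝ)) m x)) 1 = 0) :=
  deriv_IEC_eq_xi_general G τ hmd e m
end MET
end
end

section
/- Vanishing of the zeroth coefficient: Let G be a k × q matrix over GF(2) of rank k whose row space has minimum Hamming weight at least 2, with each column assigned an edge type in E = {1,…,n_e} (q_l denotes the number of type-l columns). Then for every 0 ≤ u ≤ k and every l ∈ E with q_l > 0: (i) ẽ_{(q_1,…,q_{n_e}); u} = k·C(k,u); (ii) ẽ_{(q_1,…,q_l−1,…,q_{n_e}); u} = q_l·k·C(k,u); consequently q_l·ẽ_{(q_1,…,q_{n_e}); u} − ẽ_{(q_1,…,q_l−1,…,q_{n_e}); u} = 0. -/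
open scoped Classical

noncomputable section

namespace MET

/-!
Deleting at most one column of a full-rank `G` of minimum distance at least `2` keeps the rank
`k`: a row combination vanishing on all but one coordinate is a codeword of weight at most `1`,
hence zero, hence the trivial combination. So every summand of `ẽ_{g;u}` equals `k` when the
selected columns miss at most one column of `G`. This holds for the full selection (one choice)
and for the selections missing a single type-`l` column (`q_l` choices), and there are `C(k,u)`
choices of identity columns.
-/

theorem _root_.Matrix.rank_eq_card_iff_vecMul_eq_zero {R m n : Type*} [Field R] [Fintype m]
    [Fintype n] (M : Matrix m n R) :
    M.rank = Fintype.card m ↔ ∀ x, Matrix.vecMul x M = 0 → x = 0 := by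
  rw [M.rank_eq_finrank_span_row, eq_comm, ← Set.finrank,
    ← linearIndependent_iff_card_eq_finrank_span, ← Matrix.vecMul_injective_iff,
    ← Matrix.coe_vecMulLinear, injective_iff_map_eq_zero]
  rfl

variable {n k q : ℕ}

theorem HasMinDistGE2.vecMul_eq_zero {G : Matrix (Fin k) (Fin q) (ZMod 2)}
    (hmd : HasMinDistGE2 G) {x : Fin k → ZMod 2} {A : Finset (Fin q)} (hA : Aᶜ.card ≤ 1)
    (hx : ∀ a ∈ A, (Matrix.vecMul x G) a = 0) : Matrix.vecMul x G = 0 := by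
  by_contra hne
  have hweight : hWeight (Matrix.vecMul x G) ≤ Aᶜ.card :=
    Finset.card_le_card fun j hj => Finset.mem_compl.2 fun hjA =>
      (Finset.mem_filter.1 hj).2 (hx j hjA)
  have := hmd x hne
  omega

theorem colRank_eq_of_card_compl_le_one {G : Matrix (Fin k) (Fin q) (ZMod 2)}
    (hrk : G.rank = k) (hmd : HasMinDistGE2 G) {A : Finset (Fin q)} (hA : Aᶜ.card ≤ 1)
    (T : Finset (Fin k)) : colRank G A T = k := by
  refine ((Matrix.rank_eq_card_iff_vecMul_eq_zero _).2 fun x hx => ?_).trans (Fintype.card_fin k)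
  refine ((Matrix.rank_eq_card_iff_vecMul_eq_zero G).1 (hrk.trans (Fintype.card_fin k).symm)) x ?_
  refine hmd.vecMul_eq_zero hA fun a ha => ?_
  simpa [Matrix.vecMul, dotProduct] using congrFun hx (Sum.inl ⟨a, ha⟩)

theorem eTilde_eq_card_mul {G : Matrix (Fin k) (Fin q) (ZMod 2)} (τ : Fin q → Fin n)
    (hrk : G.rank = k) (hmd : HasMinDistGE2 G) {g : Fin n → ℕ}
    (hg : ∀ A : Finset (Fin q), (∀ m, (A.filter fun j => τ j = m).card = g m) → Aᶜ.card ≤ 1)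
    (u : ℕ) :
    eTilde G τ g u = (Finset.univ.filter fun A : Finset (Fin q) =>
      ∀ m, (A.filter fun j => τ j = m).card = g m).card * (k * k.choose u) := by
  rw [eTilde, ← smul_eq_mul, ← Finset.sum_const]
  refine Finset.sum_congr rfl fun A hA => ?_
  rw [Finset.sum_congr rfl fun T _ => colRank_eq_of_card_compl_le_one hrk hmd
    (hg A (Finset.mem_filter.1 hA).2) T, Finset.sum_const, smul_eq_mul,
    Finset.univ_filter_card_eq, Finset.card_powersetCard, Finset.card_univ, Fintype.card_fin,
    mul_comm]

theorem mem_of_card_filter_eq_colCount {τ : Fin q → Fin n} {A : Finset (Fin q)} {m : Fin n}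
    (hA : (A.filter fun j => τ j = m).card = colCount τ m) {j : Fin q} (hj : τ j = m) :
    j ∈ A := by
  have hfull := Finset.eq_of_subset_of_card_le
    (Finset.filter_subset_filter _ (Finset.subset_univ A)) hA.ge
  have : j ∈ A.filter fun i => τ i = m := hfull ▸ Finset.mem_filter.2 ⟨Finset.mem_univ j, hj⟩
  exact (Finset.mem_filter.1 this).1

theorem forall_card_filter_eq_colCount_iff {τ : Fin q → Fin n} {A : Finset (Fin q)} :
    (∀ m, (A.filter fun j => τ j = m).card = colCount τ m) ↔ A = Finset.univ := by
  refine ⟨fun hA => Finset.eq_univ_iff_forall.2 fun j => mem_of_card_filter_eq_colCount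
    (hA (τ j)) rfl, ?_⟩
  rintro rfl m
  rfl

theorem forall_card_filter_eq_colCount_sub_iff {τ : Fin q → Fin n} {l : Fin n}
    (hl : 0 < colCount τ l) {A : Finset (Fin q)} :
    (∀ m, (A.filter fun j => τ j = m).card = colCount τ m - if m = l then 1 else 0) ↔
      ∃ j, τ j = l ∧ Finset.univ.erase j = A := by
  constructor
  · intro hA
    set F := Finset.univ.filter fun j => τ j = l
    have hsub : A.filter (fun j => τ j = l) ⊆ F :=
      Finset.filter_subset_filter _ (Finset.subset_univ A)
    have hmissing : (F \ A.filter fun j => τ j = l).card = 1 := by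
      have := hA l
      rw [if_pos rfl] at this
      rw [Finset.card_sdiff_of_subset hsub, this]
      change colCount τ l - (colCount τ l - 1) = 1
      omega
    obtain ⟨j, hj⟩ := Finset.card_eq_one.1 hmissing
    have hjF : j ∈ F \ A.filter fun j => τ j = l := hj ▸ Finset.mem_singleton_self j
    simp only [F, Finset.mem_sdiff, Finset.mem_filter, Finset.mem_univ, true_and] at hjF
    refine ⟨j, hjF.1, Finset.ext fun i => ?_⟩
    rw [Finset.mem_erase, and_iff_left (Finset.mem_univ i)]
    refine ⟨fun hij => ?_, fun hi hij => hjF.2 ⟨hij ▸ hi, hjF.1⟩⟩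
    by_cases hil : τ i = l
    · by_contra hiA
      have : i ∈ F \ A.filter fun j => τ j = l := by simp [F, hil, hiA]
      exact hij (Finset.mem_singleton.1 (hj ▸ this))
    · exact mem_of_card_filter_eq_colCount (by simpa [hil] using hA (τ i)) rfl
  · rintro ⟨j, hjl, rfl⟩ m
    rw [Finset.filter_erase]
    split_ifs with hm
    · subst hm
      rw [Finset.card_erase_of_mem (by simp [hjl])]
      rfl
    · rw [Finset.erase_eq_of_notMem (by simp [hjl, Ne.symm hm])]
      rfl

theorem eTilde_colCount {G : Matrix (Fin k) (Fin q) (ZMod 2)} (τ : Fin q → Fin n)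
    (hrk : G.rank = k) (hmd : HasMinDistGE2 G) (u : ℕ) :
    eTilde G τ (colCount τ) u = k * k.choose u := by
  have hfull : (Finset.univ.filter fun A : Finset (Fin q) =>
      ∀ m, (A.filter fun j => τ j = m).card = colCount τ m) = {Finset.univ} := by
    ext A
    simp [forall_card_filter_eq_colCount_iff]
  rw [eTilde_eq_card_mul τ hrk hmd (by simp [forall_card_filter_eq_colCount_iff]), hfull,
    Finset.card_singleton, one_mul]

theorem eTilde_colCount_sub_single {G : Matrix (Fin k) (Fin q) (ZMod 2)} {τ : Fin q → Fin n}
    (hrk : G.rank = k) (hmd : HasMinDistGE2 G) {l : Fin n} (hl : 0 < colCount τ l) (u : ℕ) :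
    eTilde G τ (fun m => colCount τ m - if m = l then 1 else 0) u
      = colCount τ l * (k * k.choose u) := by
  have herase : (Finset.univ.filter fun A : Finset (Fin q) =>
      ∀ m, (A.filter fun j => τ j = m).card = colCount τ m - if m = l then 1 else 0) =
        (Finset.univ.filter fun j => τ j = l).image Finset.univ.erase := by
    ext A
    simp [forall_card_filter_eq_colCount_sub_iff hl]
  have hcompl : ∀ A : Finset (Fin q),
      (∀ m, (A.filter fun j => τ j = m).card = colCount τ m - if m = l then 1 else 0) →
        Aᶜ.card ≤ 1 := by
    rintro A hA
    obtain ⟨j, -, rfl⟩ := (forall_card_filter_eq_colCount_sub_iff hl).1 hA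
    simp [Finset.compl_erase]
  rw [eTilde_eq_card_mul τ hrk hmd hcompl, herase,
    Finset.card_image_of_injOn ((Finset.erase_injOn _).mono (Finset.subset_univ _))]
  rfl

theorem eTilde_full_and_deleteOne_general {n k q : ℕ}
    (G : Matrix (Fin k) (Fin q) (ZMod 2)) (τ : Fin q → Fin n)
    (hrk : G.rank = k) (hmd : HasMinDistGE2 G)
    (u : ℕ) (l : Fin n) (hl : 0 < colCount τ l) :
    eTilde G τ (colCount τ) u = k * Nat.choose k u ∧
    eTilde G τ (fun m => colCount τ m - (if m = l then 1 else 0)) u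
      = colCount τ l * (k * Nat.choose k u) ∧
    ((colCount τ l : ℤ) * (eTilde G τ (colCount τ) u : ℤ)
      - (eTilde G τ (fun m => colCount τ m - (if m = l then 1 else 0)) u : ℤ) = 0) := by
  have hfull := eTilde_colCount τ hrk hmd u
  have hdelete := eTilde_colCount_sub_single hrk hmd hl u
  refine ⟨hfull, hdelete, ?_⟩
  rw [hfull, hdelete]
  push_cast
  ring

/-- **Vanishing of the zeroth coefficient.** For a full-rank generator matrix whose row
space has minimum Hamming weight at least `2`: (i) `ẽ_{(q_1,…,q_n);u} = k·C(k,u)`;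
(ii) `ẽ_{(q_1,…,q_l-1,…,q_n);u} = q_l·k·C(k,u)`; consequently
`q_l·ẽ_{(q_1,…,q_n);u} - ẽ_{(q_1,…,q_l-1,…,q_n);u} = 0`. -/
theorem eTilde_full_and_deleteOne {n k q : ℕ} (hn : 1 ≤ n)
    (G : Matrix (Fin k) (Fin q) (ZMod 2)) (τ : Fin q → Fin n)
    (hrk : G.rank = k) (hmd : HasMinDistGE2 G)
    (u : ℕ) (hu : u ≤ k) (l : Fin n) (hl : 0 < colCount τ l) :
    eTilde G τ (colCount τ) u = k * Nat.choose k u ∧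
    eTilde G τ (fun m => colCount τ m - (if m = l then 1 else 0)) u
      = colCount τ l * (k * Nat.choose k u) ∧
    ((colCount τ l : ℤ) * (eTilde G τ (colCount τ) u : ℤ)
      - (eTilde G τ (fun m => colCount τ m - (if m = l then 1 else 0)) u : ℤ) = 0) :=
  eTilde_full_and_deleteOne_general G τ hrk hmd u l hl

end MET
end
end

section
/- Generating-function identity for weight-2 codewords: Let G be a k × q matrix over GF(2) of rank k whose row space has minimum Hamming weight at least 2, with each column assigned an edge type in E = {1,…,n_e}. For distinct columns i ≠ j and T ⊆ {1,…,k}, let S_{i,j,T} be the matrix formed by all columns of G except columns i and j, together with the columns of the k × k identity matrix indexed by T. Then for all l,m ∈ E and every real ε: Σ_{z=0}^{k} ε^z (1−ε)^{k−z} Σ_{T ⊆ {1,…,k}, |T| = k−z} Σ_{(i,j)} (k − rank(S_{i,j,T})) = Σ_{u=1}^{k} χ_{2,u}(l,m) ε^u, where the inner sum is over all ordered pairs (i,j) of distinct column indices with i of edge type l and j of edge type m. -/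
open scoped Classical

noncomputable section

namespace MET

open Matrix
lemma zmod2_eq_one : ∀ {x : ZMod 2}, x ≠ 0 → x = 1 := by decide

lemma rank_nullity {k : ℕ} {J : Type} [Fintype J] (M : Matrix (Fin k) J (ZMod 2)) :
    M.rank + Module.finrank (ZMod 2) (LinearMap.ker (Mᵀ.mulVecLin)) = k := by
  rw [← Matrix.rank_transpose M, Matrix.rank]
  have := LinearMap.finrank_range_add_finrank_ker (Mᵀ.mulVecLin)
  simpa using this

lemma vecMul_inj {k q : ℕ} (G : Matrix (Fin k) (Fin q) (ZMod 2)) (hrk : G.rank = k) :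
    Function.Injective fun x : Fin k → ZMod 2 => Matrix.vecMul x G := by
  have h := rank_nullity G
  rw [hrk] at h
  have hker : LinearMap.ker (Gᵀ.mulVecLin) = ⊥ := by
    rw [← Submodule.finrank_eq_zero (S := LinearMap.ker (Gᵀ.mulVecLin))]
    omega
  have hinj := (LinearMap.ker_eq_bot (f := Gᵀ.mulVecLin)).mp hker
  intro x y hxy
  apply hinj
  simpa [Matrix.mulVecLin_apply, Matrix.mulVec_transpose] using hxy

lemma mem_ker_colRank {k q : ℕ} (G : Matrix (Fin k) (Fin q) (ZMod 2))
    (A : Finset (Fin q)) (T : Finset (Fin k)) (x : Fin k → ZMod 2) :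
    x ∈ LinearMap.ker ((Matrix.of fun (i : Fin k) (j : {x // x ∈ A} ⊕ {x // x ∈ T}) =>
      Sum.elim (fun a => G i a.1) (fun t => if i = t.1 then (1 : ZMod 2) else 0) j)ᵀ.mulVecLin)
      ↔ (∀ a ∈ A, Matrix.vecMul x G a = 0) ∧ (∀ t ∈ T, x t = 0) := by
  rw [LinearMap.mem_ker, Matrix.mulVecLin_apply, Matrix.mulVec_transpose]
  constructor
  · intro h
    constructor
    · intro a ha
      have := congrFun h (Sum.inl ⟨a, ha⟩)
      simpa [Matrix.vecMul, dotProduct] using this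
    · intro t ht
      have := congrFun h (Sum.inr ⟨t, ht⟩)
      simpa [Matrix.vecMul, dotProduct, eq_comm] using this
  · rintro ⟨h1, h2⟩
    funext c
    rcases c with ⟨a, ha⟩ | ⟨t, ht⟩
    · simpa [Matrix.vecMul, dotProduct] using h1 a ha
    · simpa [Matrix.vecMul, dotProduct, eq_comm] using h2 t ht

lemma supported_eq_wt2vec {k q : ℕ} {G : Matrix (Fin k) (Fin q) (ZMod 2)}
    (hmd : HasMinDistGE2 G) {i j : Fin q} (hij : i ≠ j)
    {x : Fin k → ZMod 2} (hx : x ≠ 0) (hrk : G.rank = k)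
    (hsupp : ∀ a : Fin q, a ≠ i → a ≠ j → Matrix.vecMul x G a = 0) :
    Matrix.vecMul x G = wt2vec i j := by
  set c := Matrix.vecMul x G with hc
  have hc0 : c ≠ 0 := by
    intro h0
    exact hx (vecMul_inj G hrk (by simpa [Matrix.zero_vecMul] using h0.trans (Matrix.zero_vecMul G).symm))
  have hW : 2 ≤ hWeight c := hmd x hc0
  have hsub : (Finset.univ.filter fun r => c r ≠ 0) ⊆ {i, j} := by
    intro r hr
    simp only [Finset.mem_filter] at hr
    by_contra hrij
    simp only [Finset.mem_insert, Finset.mem_singleton] at hrij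
    push_neg at hrij
    exact hr.2 (hsupp r hrij.1 hrij.2)
  have hcard2 : ({i, j} : Finset (Fin q)).card = 2 := by
    rw [Finset.card_insert_of_notMem (by simpa using hij), Finset.card_singleton]
  have heq : (Finset.univ.filter fun r => c r ≠ 0) = {i, j} :=
    Finset.eq_of_subset_of_card_le hsub (by rw [hcard2]; exact hW)
  funext r
  by_cases hr : r = i ∨ r = j
  · have : r ∈ Finset.univ.filter fun r => c r ≠ 0 := by
      rw [heq]; simp [hr]
    simp only [Finset.mem_filter] at this
    simp [wt2vec, hr, zmod2_eq_one this.2]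
  · push_neg at hr
    simp [wt2vec, hr.1, hr.2, hsupp r hr.1 hr.2]

lemma colRank_eq {k q : ℕ} (G : Matrix (Fin k) (Fin q) (ZMod 2))
    (hrk : G.rank = k) (hmd : HasMinDistGE2 G) {i j : Fin q} (hij : i ≠ j)
    (T : Finset (Fin k)) :
    ((k - colRank G (Finset.univ \ {i, j}) T : ℕ) : ℝ) =
      if ∃ x : Fin k → ZMod 2, Matrix.vecMul x G = wt2vec i j ∧ ∀ t ∈ T, x t = 0
      then 1 else 0 := by
  set A := Finset.univ \ ({i, j} : Finset (Fin q)) with hA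
  set M := (Matrix.of fun (i' : Fin k) (j' : {x // x ∈ A} ⊕ {x // x ∈ T}) =>
      Sum.elim (fun a => G i' a.1) (fun t => if i' = t.1 then (1 : ZMod 2) else 0) j')
  have hrn := rank_nullity M
  have hmem : ∀ x : Fin k → ZMod 2, x ∈ LinearMap.ker (Mᵀ.mulVecLin) ↔
      (∀ a ∈ A, Matrix.vecMul x G a = 0) ∧ (∀ t ∈ T, x t = 0) :=
    mem_ker_colRank G A T
  have hAmem : ∀ a : Fin q, a ∈ A ↔ (a ≠ i ∧ a ≠ j) := by
    intro a; simp only [hA, Finset.mem_sdiff, Finset.mem_univ, true_and, Finset.mem_insert, Finset.mem_singleton]; tauto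
  have key : ∀ x : Fin k → ZMod 2, x ≠ 0 → (x ∈ LinearMap.ker (Mᵀ.mulVecLin) ↔
      (Matrix.vecMul x G = wt2vec i j ∧ ∀ t ∈ T, x t = 0)) := by
    intro x hx
    rw [hmem]
    constructor
    · rintro ⟨h1, h2⟩
      refine ⟨supported_eq_wt2vec hmd hij hx hrk ?_, h2⟩
      intro a ha1 ha2
      exact h1 a ((hAmem a).mpr ⟨ha1, ha2⟩)
    · rintro ⟨h1, h2⟩
      refine ⟨?_, h2⟩
      intro a ha
      rw [h1]
      have := (hAmem a).mp ha
      simp [wt2vec, this.1, this.2]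
  have hcolRank : colRank G A T = M.rank := rfl
  by_cases hC : ∃ x : Fin k → ZMod 2, Matrix.vecMul x G = wt2vec i j ∧ ∀ t ∈ T, x t = 0
  · obtain ⟨x₀, hx₀⟩ := hC
    have hx₀ne : x₀ ≠ 0 := by
      intro h0
      have : Matrix.vecMul x₀ G i = wt2vec i j i := congrFun hx₀.1 i
      rw [h0] at this
      rw [Matrix.zero_vecMul] at this
      simp [wt2vec] at this
    have hker : LinearMap.ker (Mᵀ.mulVecLin) = Submodule.span (ZMod 2) {x₀} := by
      apply le_antisymm
      · intro x hx
        by_cases hx0 : x = 0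
        · simp [hx0]
        · have := ((key x hx0).mp hx).1
          have hxx : x = x₀ := vecMul_inj G hrk (this.trans hx₀.1.symm)
          rw [hxx]
          exact Submodule.mem_span_singleton_self x₀
      · rw [Submodule.span_singleton_le_iff_mem]
        exact (key x₀ hx₀ne).mpr hx₀
    rw [hcolRank]
    rw [hker, finrank_span_singleton hx₀ne] at hrn
    rw [if_pos ⟨x₀, hx₀⟩]
    have : k - M.rank = 1 := by omega
    rw [this]; norm_num
  · have hker : LinearMap.ker (Mᵀ.mulVecLin) = ⊥ := by
      rw [eq_bot_iff]
      intro x hx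
      by_cases hx0 : x = 0
      · simp [hx0]
      · exact absurd ⟨x, (key x hx0).mp hx⟩ hC
    rw [hcolRank]
    rw [hker] at hrn
    simp only [finrank_bot] at hrn
    rw [if_neg hC]
    have : k - M.rank = 0 := by omega
    rw [this]; norm_num

lemma binom_sum (k u : ℕ) (hu : u ≤ k) (ε : ℝ) :
    ∑ z ∈ Finset.range (k + 1),
      ε ^ z * (1 - ε) ^ (k - z) * ((k - u).choose (k - z) : ℝ) = ε ^ u := by
  rw [← Finset.sum_range_reflect]
  have step1 : ∀ z ∈ Finset.range (k + 1),
      ε ^ (k + 1 - 1 - z) * (1 - ε) ^ (k - (k + 1 - 1 - z)) *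
        ((k - u).choose (k - (k + 1 - 1 - z)) : ℝ)
      = (1 - ε) ^ z * ε ^ (k - z) * ((k - u).choose z : ℝ) := by
    intro z hz
    rw [Finset.mem_range] at hz
    have h1 : k + 1 - 1 - z = k - z := by omega
    have h2 : k - (k - z) = z := by omega
    rw [h1, h2]; ring
  rw [Finset.sum_congr rfl step1]
  set m := k - u with hm
  have hrange : ∑ z ∈ Finset.range (k + 1), (1 - ε) ^ z * ε ^ (k - z) * ((m).choose z : ℝ)
      = ∑ z ∈ Finset.range (m + 1), (1 - ε) ^ z * ε ^ (k - z) * ((m).choose z : ℝ) := by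
    symm
    apply Finset.sum_subset
    · intro z hz; rw [Finset.mem_range] at *; omega
    · intro z _ hz
      rw [Finset.mem_range] at hz
      rw [Nat.choose_eq_zero_of_lt (by omega)]
      simp
  rw [hrange]
  have step2 : ∀ z ∈ Finset.range (m + 1),
      (1 - ε) ^ z * ε ^ (k - z) * ((m).choose z : ℝ)
      = ((1 - ε) ^ z * ε ^ (m - z) * ((m).choose z : ℝ)) * ε ^ u := by
    intro z hz
    rw [Finset.mem_range] at hz
    have : k - z = (m - z) + u := by omega
    rw [this, pow_add]; ring
  rw [Finset.sum_congr rfl step2, ← Finset.sum_mul]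
  have := add_pow (1 - ε) ε m
  simp only [sub_add_cancel, one_pow] at this
  rw [← this]
  ring

lemma pair_identity {k q : ℕ} (G : Matrix (Fin k) (Fin q) (ZMod 2))
    (hrk : G.rank = k) (hmd : HasMinDistGE2 G) {i j : Fin q} (hij : i ≠ j) (ε : ℝ) :
    ∑ z ∈ Finset.range (k + 1), ε ^ z * (1 - ε) ^ (k - z) *
      ∑ T ∈ Finset.univ.filter (fun T : Finset (Fin k) => T.card = k - z),
        (if ∃ x : Fin k → ZMod 2, Matrix.vecMul x G = wt2vec i j ∧ ∀ t ∈ T, x t = 0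
          then (1 : ℝ) else 0)
      = ∑ u ∈ Finset.Icc 1 k,
          (if ∃ x : Fin k → ZMod 2, hWeight x = u ∧ Matrix.vecMul x G = wt2vec i j
            then (1 : ℝ) else 0) * ε ^ u := by
  by_cases hC : ∃ x : Fin k → ZMod 2, Matrix.vecMul x G = wt2vec i j
  · obtain ⟨x₀, hx₀⟩ := hC
    have hx₀ne : x₀ ≠ 0 := by
      intro h0
      have : Matrix.vecMul x₀ G i = wt2vec i j i := congrFun hx₀ i
      rw [h0] at this
      rw [Matrix.zero_vecMul] at this
      simp [wt2vec] at this
    set u₀ := hWeight x₀ with hu₀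
    have hu₀pos : 1 ≤ u₀ := by
      rw [hu₀, hWeight, Nat.one_le_iff_ne_zero, ← Nat.pos_iff_ne_zero, Finset.card_pos]
      obtain ⟨i', hi'⟩ := Function.ne_iff.mp hx₀ne
      exact ⟨i', by simpa using hi'⟩
    have hu₀le : u₀ ≤ k := by
      rw [hu₀, hWeight]
      have := Finset.card_filter_le (Finset.univ : Finset (Fin k)) (fun i => x₀ i ≠ 0)
      simpa using this
    -- RHS
    have hRHS : ∀ u ∈ Finset.Icc 1 k,
        (if ∃ x : Fin k → ZMod 2, hWeight x = u ∧ Matrix.vecMul x G = wt2vec i j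
          then (1 : ℝ) else 0) * ε ^ u
        = (if u = u₀ then (1:ℝ) else 0) * ε ^ u := by
      intro u _
      congr 1
      apply if_congr _ rfl rfl
      constructor
      · rintro ⟨x, hxw, hxG⟩
        have : x = x₀ := vecMul_inj G hrk (hxG.trans hx₀.symm)
        rw [← hxw, this]
      · rintro rfl
        exact ⟨x₀, rfl, hx₀⟩
    rw [Finset.sum_congr rfl hRHS]
    simp only [ite_mul, one_mul, zero_mul]
    rw [Finset.sum_ite_eq' (Finset.Icc 1 k) u₀ (fun u => ε ^ u),
      if_pos (Finset.mem_Icc.mpr ⟨hu₀pos, hu₀le⟩)]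
    -- LHS
    set Z := Finset.univ.filter (fun t : Fin k => x₀ t = 0) with hZ
    have hZcard : Z.card = k - u₀ := by
      have h2 : Z = Finset.univ.filter (fun i : Fin k => ¬ x₀ i ≠ 0) := by
        ext t; simp [hZ]
      rw [h2]
      have h := Finset.card_filter_add_card_filter_not
        (s := (Finset.univ : Finset (Fin k))) (p := fun i => x₀ i ≠ 0)
      simp only [Finset.card_univ, Fintype.card_fin] at h
      have hu : u₀ = (Finset.univ.filter fun i : Fin k => x₀ i ≠ 0).card := rfl
      omega
    have hinner : ∀ z : ℕ,
        ∑ T ∈ Finset.univ.filter (fun T : Finset (Fin k) => T.card = k - z),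
          (if ∃ x : Fin k → ZMod 2, Matrix.vecMul x G = wt2vec i j ∧ ∀ t ∈ T, x t = 0
            then (1 : ℝ) else 0)
        = ((k - u₀).choose (k - z) : ℝ) := by
      intro z
      have hcond : ∀ T : Finset (Fin k),
          (∃ x : Fin k → ZMod 2, Matrix.vecMul x G = wt2vec i j ∧ ∀ t ∈ T, x t = 0)
            ↔ T ⊆ Z := by
        intro T
        constructor
        · rintro ⟨x, hxG, hxt⟩
          have : x = x₀ := vecMul_inj G hrk (hxG.trans hx₀.symm)
          subst this
          intro t ht
          simp [hZ, hxt t ht]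
        · intro hTZ
          refine ⟨x₀, hx₀, fun t ht => ?_⟩
          have := hTZ ht
          simp [hZ] at this
          exact this
      calc ∑ T ∈ Finset.univ.filter (fun T : Finset (Fin k) => T.card = k - z),
            (if ∃ x : Fin k → ZMod 2, Matrix.vecMul x G = wt2vec i j ∧ ∀ t ∈ T, x t = 0
              then (1 : ℝ) else 0)
          = ∑ T ∈ Finset.univ.filter (fun T : Finset (Fin k) => T.card = k - z),
            (if T ⊆ Z then (1 : ℝ) else 0) := by
            apply Finset.sum_congr rfl
            intro T _
            exact if_congr (hcond T) rfl rfl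
        _ = ((Finset.univ.filter (fun T : Finset (Fin k) => T.card = k - z)).filter
              (fun T => T ⊆ Z)).card := by
            rw [Finset.card_filter]
            push_cast
            rfl
        _ = (Z.powersetCard (k - z)).card := by
            congr 2
            ext T
            simp [Finset.mem_powersetCard, and_comm]
        _ = ((k - u₀).choose (k - z) : ℝ) := by
            rw [Finset.card_powersetCard, hZcard]
    simp only [hinner]
    exact binom_sum k u₀ hu₀le ε
  · push_neg at hC
    have h1 : ∀ z ∈ Finset.range (k+1), ε ^ z * (1 - ε) ^ (k - z) *
        ∑ T ∈ Finset.univ.filter (fun T : Finset (Fin k) => T.card = k - z),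
          (if ∃ x : Fin k → ZMod 2, Matrix.vecMul x G = wt2vec i j ∧ ∀ t ∈ T, x t = 0
            then (1 : ℝ) else 0) = 0 := by
      intro z _
      have : ∀ T ∈ Finset.univ.filter (fun T : Finset (Fin k) => T.card = k - z),
          (if ∃ x : Fin k → ZMod 2, Matrix.vecMul x G = wt2vec i j ∧ ∀ t ∈ T, x t = 0
            then (1 : ℝ) else 0) = 0 := by
        intro T _
        rw [if_neg]
        rintro ⟨x, hx1, _⟩
        exact hC x hx1
      rw [Finset.sum_congr rfl this]
      simp
    rw [Finset.sum_congr rfl h1]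
    have h2 : ∀ u ∈ Finset.Icc 1 k,
        (if ∃ x : Fin k → ZMod 2, hWeight x = u ∧ Matrix.vecMul x G = wt2vec i j
          then (1 : ℝ) else 0) * ε ^ u = 0 := by
      intro u _
      rw [if_neg, zero_mul]
      rintro ⟨x, _, hx2⟩
      exact hC x hx2
    rw [Finset.sum_congr rfl h2]
    simp
/-- **Generating-function identity for weight-2 codewords.**
`Σ_{z=0}^{k} ε^z (1-ε)^{k-z} Σ_{|T| = k-z} Σ_{(i,j)} (k - rank(S_{i,j,T}))
  = Σ_{u=1}^{k} χ_{2,u}(l,m) ε^u`. -/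
theorem genfun_weight2 {n k q : ℕ} (hn : 1 ≤ n)
    (G : Matrix (Fin k) (Fin q) (ZMod 2)) (τ : Fin q → Fin n)
    (hrk : G.rank = k) (hmd : HasMinDistGE2 G) (l m : Fin n) (ε : ℝ) :
    ∑ z ∈ Finset.range (k + 1), ε ^ z * (1 - ε) ^ (k - z) *
      ∑ T ∈ Finset.univ.filter (fun T : Finset (Fin k) => T.card = k - z),
        ∑ p ∈ Finset.univ.filter
            (fun p : Fin q × Fin q => p.1 ≠ p.2 ∧ τ p.1 = l ∧ τ p.2 = m),
          ((k - colRank G (Finset.univ \ {p.1, p.2}) T : ℕ) : ℝ)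
      = ∑ u ∈ Finset.Icc 1 k, (chi2 G τ u l m : ℝ) * ε ^ u := by
  classical
  set P : Finset (Fin q × Fin q) :=
    Finset.univ.filter (fun p : Fin q × Fin q => p.1 ≠ p.2 ∧ τ p.1 = l ∧ τ p.2 = m) with hP
  have hpair : ∀ p ∈ P, p.1 ≠ p.2 := by
    intro p hp; rw [hP, Finset.mem_filter] at hp; exact hp.2.1
  have hchi : ∀ u : ℕ, (chi2 G τ u l m : ℝ) =
      ∑ p ∈ P, (if ∃ x : Fin k → ZMod 2, hWeight x = u ∧
        Matrix.vecMul x G = wt2vec p.1 p.2 then (1 : ℝ) else 0) := by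
    intro u
    have hfe : (Finset.univ.filter fun p : Fin q × Fin q =>
        p.1 ≠ p.2 ∧ τ p.1 = l ∧ τ p.2 = m ∧ ∃ x : Fin k → ZMod 2,
          hWeight x = u ∧ Matrix.vecMul x G = wt2vec p.1 p.2)
        = P.filter (fun p => ∃ x : Fin k → ZMod 2,
            hWeight x = u ∧ Matrix.vecMul x G = wt2vec p.1 p.2) := by
      rw [hP, Finset.filter_filter]
      apply Finset.filter_congr
      intro p _
      tauto
    rw [chi2, hfe, Finset.card_filter]
    push_cast
    rfl
  calc ∑ z ∈ Finset.range (k + 1), ε ^ z * (1 - ε) ^ (k - z) *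
        ∑ T ∈ Finset.univ.filter (fun T : Finset (Fin k) => T.card = k - z),
          ∑ p ∈ P, ((k - colRank G (Finset.univ \ {p.1, p.2}) T : ℕ) : ℝ)
      = ∑ p ∈ P, ∑ z ∈ Finset.range (k + 1), ε ^ z * (1 - ε) ^ (k - z) *
          ∑ T ∈ Finset.univ.filter (fun T : Finset (Fin k) => T.card = k - z),
            ((k - colRank G (Finset.univ \ {p.1, p.2}) T : ℕ) : ℝ) := by
        rw [Finset.sum_comm]
        apply Finset.sum_congr rfl
        intro z _
        simp only [Finset.mul_sum]
        rw [Finset.sum_comm]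
    _ = ∑ p ∈ P, ∑ u ∈ Finset.Icc 1 k,
          (if ∃ x : Fin k → ZMod 2, hWeight x = u ∧
            Matrix.vecMul x G = wt2vec p.1 p.2 then (1 : ℝ) else 0) * ε ^ u := by
        apply Finset.sum_congr rfl
        intro p hp
        have hstep : ∑ z ∈ Finset.range (k + 1), ε ^ z * (1 - ε) ^ (k - z) *
            ∑ T ∈ Finset.univ.filter (fun T : Finset (Fin k) => T.card = k - z),
              ((k - colRank G (Finset.univ \ {p.1, p.2}) T : ℕ) : ℝ)
            = ∑ z ∈ Finset.range (k + 1), ε ^ z * (1 - ε) ^ (k - z) *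
            ∑ T ∈ Finset.univ.filter (fun T : Finset (Fin k) => T.card = k - z),
              (if ∃ x : Fin k → ZMod 2, Matrix.vecMul x G = wt2vec p.1 p.2 ∧
                ∀ t ∈ T, x t = 0 then (1 : ℝ) else 0) := by
          apply Finset.sum_congr rfl
          intro z _
          congr 1
          apply Finset.sum_congr rfl
          intro T _
          exact colRank_eq G hrk hmd (hpair p hp) T
        rw [hstep]
        exact pair_identity G hrk hmd (hpair p hp) ε
    _ = ∑ u ∈ Finset.Icc 1 k, (chi2 G τ u l m : ℝ) * ε ^ u := by
        rw [Finset.sum_comm]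
        apply Finset.sum_congr rfl
        intro u _
        rw [hchi u, Finset.sum_mul]

end MET
end
end

section
/- VN EXIT function tends to 1 at the all-ones point: Let γ be a variable-node type whose generator matrix G_γ (of size k_γ × q_γ over GF(2)) has rank k_γ and whose row space has minimum Hamming weight at least 2, with columns typed by E and no punctured bits. Then for every e ∈ E with q_{γ,e} > 0 and every ε ∈ (0,1), I_{EV,e}^{(γ)}(I,ε) → 1 as I → (1,…,1); equivalently, I_{EV,e}^{(γ)}((1,…,1),ε) = 1. -/
open scoped Classical

noncomputable section

namespace MET

-- helper 1
lemma rank_eq_of_vecMul_inj {k : ℕ} {m : Type*} [Fintype m] (M : Matrix (Fin k) m (ZMod 2))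
    (H : ∀ x : Fin k → ZMod 2, Matrix.vecMul x M = 0 → x = 0) : M.rank = k := by
  have hinj : Function.Injective (Matrix.transpose M).mulVecLin := by
    rw [← LinearMap.ker_eq_bot, LinearMap.ker_eq_bot']
    intro x hx
    exact H x (by simpa [Matrix.mulVecLin_apply, Matrix.mulVec_transpose] using hx)
  rw [← Matrix.rank_transpose, Matrix.rank, LinearMap.finrank_range_of_inj hinj]
  simp

-- helper 2
lemma vecMul_eq_zero_of_rank {k q : ℕ} (G : Matrix (Fin k) (Fin q) (ZMod 2)) (hrk : G.rank = k) :
    ∀ x : Fin k → ZMod 2, Matrix.vecMul x G = 0 → x = 0 := by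
  intro x hx
  have h1 : Module.finrank (ZMod 2) (LinearMap.range (Matrix.transpose G).mulVecLin) = k := by
    rw [← Matrix.rank, Matrix.rank_transpose]; exact hrk
  have h2 := LinearMap.finrank_range_add_finrank_ker (Matrix.transpose G).mulVecLin
  rw [h1, Module.finrank_pi] at h2
  simp only [Fintype.card_fin] at h2
  have hker : LinearMap.ker (Matrix.transpose G).mulVecLin = ⊥ := by
    apply Submodule.finrank_eq_zero.mp; omega
  have hx2 : x ∈ LinearMap.ker (Matrix.transpose G).mulVecLin := by
    simp [LinearMap.mem_ker, Matrix.mulVecLin_apply, Matrix.mulVec_transpose, hx]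
  rw [hker] at hx2; simpa using hx2

-- helper 3
lemma colRank_eq_k {k q : ℕ} (G : Matrix (Fin k) (Fin q) (ZMod 2))
    (A : Finset (Fin q)) (T : Finset (Fin k))
    (H : ∀ x : Fin k → ZMod 2, (∀ a ∈ A, Matrix.vecMul x G a = 0) → x = 0) :
    colRank G A T = k := by
  unfold colRank
  apply rank_eq_of_vecMul_inj
  intro x hx
  apply H x
  intro a ha
  have := congrFun hx (Sum.inl ⟨a, ha⟩)
  simpa [Matrix.vecMul, dotProduct] using this

-- helper 4
lemma card_eq_sum_fiber {n q : ℕ} (τ : Fin q → Fin n) (A : Finset (Fin q)) :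
    A.card = ∑ l, (A.filter fun j => τ j = l).card :=
  Finset.card_eq_sum_card_fiberwise (fun x _ => Finset.mem_univ (τ x))

lemma sum_colCount {n q : ℕ} (τ : Fin q → Fin n) : ∑ l, colCount τ l = q := by
  have := card_eq_sum_fiber τ (Finset.univ : Finset (Fin q))
  simpa [colCount] using this.symm

-- helper 5
lemma filter_full {n q : ℕ} (τ : Fin q → Fin n) :
    (Finset.univ.filter (fun A : Finset (Fin q) =>
      ∀ l, (A.filter fun j => τ j = l).card = colCount τ l)) = {Finset.univ} := by
  ext A
  simp only [Finset.mem_filter, Finset.mem_univ, true_and, Finset.mem_singleton]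
  constructor
  · intro h
    apply Finset.eq_univ_of_card
    rw [card_eq_sum_fiber τ A]
    simp only [h]
    rw [sum_colCount τ]
    simp
  · rintro rfl l
    rfl

-- helper 6
lemma filter_erase {n q : ℕ} (τ : Fin q → Fin n) (e : Fin n) (hq : 0 < colCount τ e) :
    (Finset.univ.filter (fun A : Finset (Fin q) =>
      ∀ l, (A.filter fun j => τ j = l).card = colCount τ l - (if l = e then 1 else 0))) =
    (Finset.univ.filter fun j => τ j = e).image (fun j => Finset.univ.erase j) := by
  have hqpos : 0 < q := by
    obtain ⟨j, _⟩ := Finset.card_pos.mp hq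
    exact j.pos
  ext A
  simp only [Finset.mem_filter, Finset.mem_univ, true_and, Finset.mem_image]
  constructor
  · intro h
    have hsum1 : (∑ l, (colCount τ l - if l = e then 1 else 0)) =
        (∑ l, colCount τ l) - 1 := by
      rw [Finset.sum_tsub_distrib _ (fun l _ => by
        by_cases hl : l = e
        · subst hl; simp; omega
        · simp [hl])]
      congr 1
      simp
    have hcard : A.card = q - 1 := by
      rw [card_eq_sum_fiber τ A]
      simp only [h]
      rw [hsum1, sum_colCount τ]
    have hcompl : (Finset.univ \ A).card = 1 := by
      rw [Finset.card_sdiff_of_subset (Finset.subset_univ A)]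
      simp only [Finset.card_univ, Fintype.card_fin, hcard]
      omega
    obtain ⟨j, hj⟩ := Finset.card_eq_one.mp hcompl
    have hmemiff : ∀ i, i ∉ A ↔ i = j := by
      intro i
      rw [← Finset.mem_singleton, ← hj]
      simp
    have hAeq : A = Finset.univ.erase j := by
      ext i
      simp only [Finset.mem_erase, Finset.mem_univ, and_true]
      have := not_congr (hmemiff i)
      simpa [not_not] using this
    refine ⟨j, ?_, hAeq.symm⟩
    by_contra hje
    have hje' : τ j ≠ e := hje
    have hthis := h (τ j)
    rw [hAeq] at hthis
    have hfe : ((Finset.univ.erase j).filter fun i => τ i = τ j) =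
        (Finset.univ.filter fun i => τ i = τ j).erase j := by
      ext i
      simp only [Finset.mem_filter, Finset.mem_erase, Finset.mem_univ, true_and]
      tauto
    rw [hfe, Finset.card_erase_of_mem (by simp)] at hthis
    rw [if_neg hje'] at hthis
    have hmem : 0 < (Finset.univ.filter fun i => τ i = τ j).card :=
      Finset.card_pos.mpr ⟨j, by simp⟩
    simp only [colCount] at hthis
    omega
  · rintro ⟨j, hj, rfl⟩ l
    have hfe : ((Finset.univ.erase j).filter fun i => τ i = l) =
        (Finset.univ.filter fun i => τ i = l).erase j := by
      ext i
      by_cases hij : i = j <;> simp [hij]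
    rw [hfe]
    by_cases hjl : τ j = l
    · rw [Finset.card_erase_of_mem (by simp [hjl])]
      have hle : l = e := hjl ▸ hj
      simp [hle, colCount]
    · rw [Finset.erase_eq_of_notMem (by simp [hjl])]
      have hle : l ≠ e := fun h2 => hjl (h2 ▸ hj)
      simp [hle, colCount]


lemma erase_inj_univ {q : ℕ} : ∀ x ∈ (Finset.univ : Finset (Fin q)), ∀ y ∈ (Finset.univ : Finset (Fin q)),
    (Finset.univ.erase x = Finset.univ.erase y) → x = y := by
  intro x _ y _ hxy
  by_contra hne
  have hx : x ∈ Finset.univ.erase y := Finset.mem_erase.mpr ⟨hne, Finset.mem_univ x⟩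
  rw [← hxy] at hx
  exact (Finset.notMem_erase x _) hx

lemma eTilde_full_eq {n k q : ℕ} (G : Matrix (Fin k) (Fin q) (ZMod 2)) (τ : Fin q → Fin n)
    (hrk : G.rank = k) (u : ℕ) :
    eTilde G τ (colCount τ) u =
      (Finset.univ.filter (fun T : Finset (Fin k) => T.card = u)).card * k := by
  unfold eTilde
  rw [filter_full τ, Finset.sum_singleton]
  rw [Finset.sum_congr rfl (fun T _ => colRank_eq_k G _ T (fun x hx =>
    vecMul_eq_zero_of_rank G hrk x (funext fun a => hx a (Finset.mem_univ a))))]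
  rw [Finset.sum_const, smul_eq_mul]

lemma eTilde_erase_eq {n k q : ℕ} (G : Matrix (Fin k) (Fin q) (ZMod 2)) (τ : Fin q → Fin n)
    (hrk : G.rank = k) (hmd : HasMinDistGE2 G) (e : Fin n) (hq : 0 < colCount τ e) (u : ℕ) :
    eTilde G τ (fun l => colCount τ l - (if l = e then 1 else 0)) u =
      colCount τ e * ((Finset.univ.filter (fun T : Finset (Fin k) => T.card = u)).card * k) := by
  unfold eTilde
  rw [filter_erase τ e hq]
  rw [Finset.sum_image (fun x hx y hy h =>
    erase_inj_univ x (Finset.mem_univ x) y (Finset.mem_univ y) h)]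
  have hterm : ∀ j ∈ Finset.univ.filter (fun j => τ j = e),
      (∑ T ∈ Finset.univ.filter (fun T : Finset (Fin k) => T.card = u),
        colRank G (Finset.univ.erase j) T) =
      (Finset.univ.filter (fun T : Finset (Fin k) => T.card = u)).card * k := by
    intro j _
    rw [Finset.sum_congr rfl (fun T _ => colRank_eq_k G _ T ?_), Finset.sum_const, smul_eq_mul]
    intro x hx
    by_contra hxne
    have hc : Matrix.vecMul x G ≠ 0 := fun h0 => hxne (vecMul_eq_zero_of_rank G hrk x h0)
    have hw := hmd x hc
    unfold hWeight at hw
    have h2 : 1 < (Finset.univ.filter fun i => Matrix.vecMul x G i ≠ 0).card := hw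
    obtain ⟨a, ha, b, hb, hab⟩ := Finset.one_lt_card.mp h2
    simp only [Finset.mem_filter, Finset.mem_univ, true_and] at ha hb
    rcases eq_or_ne a j with rfl | hne
    · exact hb (hx b (Finset.mem_erase.mpr ⟨fun h => hab h.symm, Finset.mem_univ b⟩))
    · exact ha (hx a (Finset.mem_erase.mpr ⟨hne, Finset.mem_univ a⟩))
  rw [Finset.sum_congr rfl hterm, Finset.sum_const, smul_eq_mul]
  rfl

lemma aVN_zero_at_zero {n k q : ℕ} (G : Matrix (Fin k) (Fin q) (ZMod 2)) (τ : Fin q → Fin n)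
    (hrk : G.rank = k) (hmd : HasMinDistGE2 G) (e : Fin n) (hq : 0 < colCount τ e) (z : ℕ) :
    aVN G τ e (fun _ => 0) z = 0 := by
  unfold aVN
  simp only [Nat.sub_zero]
  rw [eTilde_full_eq G τ hrk (k - z), eTilde_erase_eq G τ hrk hmd e hq (k - z)]
  push_cast
  ring

/-- **VN EXIT function tends to 1 at the all-ones point.** For a VN type with full-rank
generator matrix whose local code has minimum distance at least `2` and no punctured
bits, `I_{EV,e}^{(γ)}(I,ε) → 1` as `I → (1,…,1)`; equivalently,
`I_{EV,e}^{(γ)}((1,…,1),ε) = 1`. -/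
theorem IEV_tendsto_one {n k q : ℕ} (hn : 1 ≤ n)
    (G : Matrix (Fin k) (Fin q) (ZMod 2)) (τ : Fin q → Fin n)
    (hrk : G.rank = k) (hmd : HasMinDistGE2 G)
    (e : Fin n) (he : 0 < colCount τ e) (ε : ℝ) (hε : ε ∈ Set.Ioo (0 : ℝ) 1) :
    Filter.Tendsto (fun I : Fin n → ℝ => IEV G τ e I ε)
      (nhds fun _ => (1 : ℝ)) (nhds 1) ∧
    IEV G τ e (fun _ => 1) ε = 1 := by
  have hval : IEV G τ e (fun _ => 1) ε = 1 := by
    unfold IEV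
    have hz : ∀ z ∈ Finset.range (k + 1),
        ε ^ z * (1 - ε) ^ (k - z) *
          ∑ t ∈ tRange (colCount τ) e,
            (∏ l, ((1 : ℝ) - 1) ^ t l *
              ((1 : ℝ)) ^ (colCount τ l - t l - (if l = e then 1 else 0))) *
              aVN G τ e t z = 0 := by
      intro z _
      have hsum : ∑ t ∈ tRange (colCount τ) e,
          (∏ l, ((1 : ℝ) - 1) ^ t l *
            ((1 : ℝ)) ^ (colCount τ l - t l - (if l = e then 1 else 0))) *
            aVN G τ e t z = 0 := by
        apply Finset.sum_eq_zero
        intro t _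
        by_cases ht : t = fun _ => 0
        · subst ht
          rw [aVN_zero_at_zero G τ hrk hmd e he z, mul_zero]
        · have : ∃ l, t l ≠ 0 := by
            by_contra hcon
            push_neg at hcon
            exact ht (funext hcon)
          obtain ⟨l, hl⟩ := this
          rw [Finset.prod_eq_zero (Finset.mem_univ l) (by simp [zero_pow hl]), zero_mul]
      rw [hsum, mul_zero]
    rw [Finset.sum_eq_zero hz, mul_zero, sub_zero]
  refine ⟨?_, hval⟩
  have hcont : Continuous fun I : Fin n → ℝ => IEV G τ e I ε := by
    unfold IEV
    fun_prop
  have := hcont.tendsto (fun _ => (1 : ℝ))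
  rwa [hval] at this
end MET
end
end
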